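/- Inexact matrix-vector products model as flexible preconditioning: if at step j the computed product is (A + E_j) z_j for some error matrix E_j with A + E_j possibly differing arbitrarily across j, then the computed quantities coincide exactly with those of FGMRES applied with 'preconditioner applications' z_j' := z_j + A^{-1} E_j z_j; in particular, the projected least-squares relation ||b - A(x_0 + Z_j' y)||_2 = ||beta e_1 - H̄_j y||_2 holds with Z_j' = [z_1', ..., z_j']. -/

import Mathlib

/-! The error of an inexact product is absorbed into the preconditioned vector:
`A (z + A⁻¹ E z) = (A + E) z`, so the faulty Arnoldi relation `(A + E_k) z_k = Q H̄ e_k` is the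
exact flexible relation `A z'_k = Q H̄ e_k`. The usual FGMRES argument then applies verbatim:
with `r₀ = β q₀` the residual of `x₀ + Z' y` is `Q (β e₁ - H̄ y)`, and `Q` has orthonormal
columns, so it preserves the Euclidean norm. -/

open Matrix

noncomputable def vnorm {n : ℕ} (v : Fin n → ℝ) : ℝ := Real.sqrt (∑ i, (v i) ^ 2)

theorem Matrix.mulVec_add_nonsing_inv_mulVec {R n : Type*} [CommRing R] [Fintype n]
    [DecidableEq n] (A E : Matrix n n R) (hA : IsUnit A.det) (z : n → R) :
    A *ᵥ (z + A⁻¹ *ᵥ (E *ᵥ z)) = (A + E) *ᵥ z := by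
  rw [mulVec_add, mulVec_mulVec, mul_nonsing_inv A hA, one_mulVec, add_mulVec]

theorem sum_smul_sum_smul_eq_sum_mulVec_smul {R M ι κ : Type*} [CommSemiring R] [AddCommMonoid M]
    [Module R M] [Fintype ι] [Fintype κ] (H : Matrix ι κ R) (q : ι → M) (y : κ → R) :
    ∑ k, y k • ∑ i, H i k • q i = ∑ i, (H *ᵥ y) i • q i := by
  simp only [Finset.smul_sum, smul_smul, mulVec, dotProduct, Finset.sum_smul]
  rw [Finset.sum_comm]
  simp only [mul_comm]

theorem sub_mulVec_add_sum_smul_eq_sum_smul {R n ι κ : Type*} [CommRing R] [Fintype n]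
    [Fintype ι] [Fintype κ] [DecidableEq ι] (A : Matrix n n R) (H : Matrix ι κ R)
    (q : ι → n → R) (w : κ → n → R) (hw : ∀ k, A *ᵥ w k = ∑ i, H i k • q i)
    (b x₀ : n → R) (β : R) (i₀ : ι) (hr₀ : b - A *ᵥ x₀ = β • q i₀) (y : κ → R) :
    b - A *ᵥ (x₀ + ∑ k, y k • w k) = ∑ i, ((fun i => if i = i₀ then β else 0) - H *ᵥ y) i • q i := by
  have hAw : A *ᵥ ∑ k, y k • w k = ∑ i, (H *ᵥ y) i • q i := by
    simp only [mulVec_sum, mulVec_smul, hw, sum_smul_sum_smul_eq_sum_mulVec_smul]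
  simp only [Pi.sub_apply, sub_smul, Finset.sum_sub_distrib, ite_smul, zero_smul,
    Finset.sum_ite_eq', Finset.mem_univ, if_true, mulVec_add, hAw, ← hr₀]
  abel

theorem vnorm_sum_smul_of_orthonormal {n m : ℕ} (q : Fin m → Fin n → ℝ)
    (horth : ∀ i k, q i ⬝ᵥ q k = if i = k then 1 else 0) (c : Fin m → ℝ) :
    vnorm (∑ i, c i • q i) = vnorm c := by
  have hsq : ∀ {p : ℕ} (v : Fin p → ℝ), ∑ t, v t ^ 2 = v ⬝ᵥ v := fun v => by
    simp only [dotProduct, sq]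
  simp only [vnorm, hsq, sum_dotProduct, dotProduct_sum, smul_dotProduct, dotProduct_smul,
    horth, smul_eq_mul, mul_ite, mul_one, mul_zero, Finset.sum_ite_eq', Finset.mem_univ, if_true]
  rfl

theorem inexact_products_as_flexible_preconditioning_general
    {n m : ℕ}
    (A : Matrix (Fin n) (Fin n) ℝ) (hA : A.det ≠ 0)
    (E : Fin m → Matrix (Fin n) (Fin n) ℝ)
    (b x0 : Fin n → ℝ)
    (r0 : Fin n → ℝ) (hr0 : r0 = b - A.mulVec x0)
    (β : ℝ) (hβpos : 0 < β)
    (q : Fin (m + 1) → Fin n → ℝ)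
    (hq0 : q 0 = β⁻¹ • r0)
    (horth : ∀ i k : Fin (m + 1), (∑ t, q i t * q k t) = if i = k then 1 else 0)
    (z : Fin m → Fin n → ℝ)
    (H : Matrix (Fin (m + 1)) (Fin m) ℝ)
    (hrel : ∀ k : Fin m, (A + E k).mulVec (z k) = ∑ i, H i k • q i)
    (z' : Fin m → Fin n → ℝ)
    (hz' : ∀ k, z' k = z k + A⁻¹.mulVec ((E k).mulVec (z k))) :
    (∀ k : Fin m, A.mulVec (z' k) = (A + E k).mulVec (z k)) ∧
    ∀ y : Fin m → ℝ,
      vnorm (b - A.mulVec (x0 + ∑ k, y k • z' k)) =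
        vnorm ((fun i => if i = (0 : Fin (m + 1)) then β else 0) - H.mulVec y) := by
  have hAz' : ∀ k, A *ᵥ z' k = (A + E k) *ᵥ z k := fun k => by
    rw [hz' k, mulVec_add_nonsing_inv_mulVec _ _ (isUnit_iff_ne_zero.mpr hA)]
  refine ⟨hAz', fun y => ?_⟩
  have hr₀ : b - A *ᵥ x0 = β • q 0 := by rw [hq0, ← hr0, smul_inv_smul₀ hβpos.ne']
  rw [sub_mulVec_add_sum_smul_eq_sum_smul A H q z' (fun k => (hAz' k).trans (hrel k)) b x0 β 0 hr₀]
  exact vnorm_sum_smul_of_orthonormal q horth _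

/-- Inexact matrix-vector products model as flexible preconditioning: if the computed
product at step `j` is `(A + E_j) z_j`, the computed quantities coincide exactly with
those of FGMRES applied with preconditioner applications `z_j' = z_j + A⁻¹ E_j z_j`;
in particular `A z_j' = (A + E_j) z_j` and the projected least-squares relation
`‖b - A(x_0 + Z' y)‖₂ = ‖β e_1 - H̄ y‖₂` holds. -/
theorem inexact_products_as_flexible_preconditioning
    {n m : ℕ}
    (A : Matrix (Fin n) (Fin n) ℝ) (hA : A.det ≠ 0)
    (E : Fin m → Matrix (Fin n) (Fin n) ℝ)
    (b x0 : Fin n → ℝ)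
    (r0 : Fin n → ℝ) (hr0 : r0 = b - A.mulVec x0)
    (β : ℝ) (hβ : β = vnorm r0) (hβpos : 0 < β)
    (q : Fin (m + 1) → Fin n → ℝ)
    (hq0 : q 0 = β⁻¹ • r0)
    (horth : ∀ i k : Fin (m + 1), (∑ t, q i t * q k t) = if i = k then 1 else 0)
    (z : Fin m → Fin n → ℝ)
    (H : Matrix (Fin (m + 1)) (Fin m) ℝ)
    (hrel : ∀ k : Fin m, (A + E k).mulVec (z k) = ∑ i, H i k • q i)
    (z' : Fin m → Fin n → ℝ)
    (hz' : ∀ k, z' k = z k + A⁻¹.mulVec ((E k).mulVec (z k))) :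
    (∀ k : Fin m, A.mulVec (z' k) = (A + E k).mulVec (z k)) ∧
    ∀ y : Fin m → ℝ,
      vnorm (b - A.mulVec (x0 + ∑ k, y k • z' k)) =
        vnorm ((fun i => if i = (0 : Fin (m + 1)) then β else 0) - H.mulVec y) :=
  inexact_products_as_flexible_preconditioning_general A hA E b x0 r0 hr0 β hβpos q hq0 horth z H
    hrel z' hz'
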